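/- Let v be an even, nondecreasing, submultiplicative weight with Σ_{l∈ℤ} v(l)^{-2} < ∞, let h > 0, n ∈ ℕ, p = hn, and let f be continuous with amalgam norm ‖f‖_W = (Σ_{l∈ℤ} sup_{x∈[0,1]} |f(x+l)|² v(l)²)^{1/2} < ∞. Then ( h Σ_{j∈[n]} |Σ_{l≠0} f(hj + pl)|² )^{1/2} ≤ v(1) · Φ_v(p) · (1+h)^{1/2} · ‖f‖_W, where [n] = {j ∈ ℤ : −n/2 < j ≤ n/2} and Φ_v(p) = (2 Σ_{m=0}^∞ v(pm + p/2)^{-2})^{1/2}. -/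

import Mathlib

/-- The index set [n] = {j ∈ ℤ : −n/2 < j ≤ n/2}. -/
noncomputable def Idx (n : ℕ) : Finset ℤ :=
  (Finset.Icc (-(n : ℤ)) (n : ℤ)).filter fun j => -(n : ℤ) < 2*j ∧ 2*j ≤ (n : ℤ)

/-- Local sup of |f| on the unit interval [l, l+1]. -/
noncomputable def locSup (f : ℝ → ℂ) (l : ℤ) : ℝ :=
  ⨆ x ∈ Set.Icc (0:ℝ) 1, ‖f (x + (l : ℝ))‖

/-! At a sample point `x = hj`, Cauchy–Schwarz with the weight `v` bounds
`|Σ_{l≠0} f(x + pl)|²` by `Σ_{l≠0} v(x + pl)⁻²` times `Σ_{l≠0} |f(x + pl)|² v(x + pl)²`. For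
`|x| ≤ p/2` we have `|x + pl| ≥ p(|l| - 1) + p/2`, so the first factor is at most `Φ_v(p)²`.
The integers `j + nl` with `j ∈ [n]` are pairwise distinct, so summing the second factor over `j`
gives at most the full sample sum `Σ_k |f(hk)|² v(hk)²`. Since `v(x) ≤ v(⌊x⌋) v(1)` and at most
`⌈1/h⌉` samples `hk` fall into each unit interval, `h` times that sum is at most
`h⌈1/h⌉ v(1)² ‖f‖_W² ≤ (1 + h) v(1)² ‖f‖_W²`. -/

open Set

lemma norm_le_locSup {f : ℝ → ℂ} (hf : Continuous f) (l : ℤ) {y : ℝ} (hy : y ∈ Icc (0 : ℝ) 1) :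
    ‖f (y + l)‖ ≤ locSup f l := by
  obtain ⟨C, hC⟩ := isCompact_Icc.exists_bound_of_continuousOn
    (by fun_prop : ContinuousOn (fun y : ℝ => f (y + l)) (Icc 0 1))
  have hbdd : BddAbove (range fun y : ℝ => ⨆ _ : y ∈ Icc (0 : ℝ) 1, ‖f (y + l)‖) :=
    ⟨max C 0, forall_mem_range.2 fun y =>
      Real.iSup_le (fun hy => (hC y hy).trans (le_max_left _ _)) (le_max_right _ _)⟩
  exact le_ciSup_of_le hbdd y (by rw [ciSup_pos hy])

lemma norm_le_locSup_floor {f : ℝ → ℂ} (hf : Continuous f) (x : ℝ) : ‖f x‖ ≤ locSup f ⌊x⌋ := by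
  simpa using norm_le_locSup hf ⌊x⌋ ⟨Int.fract_nonneg x, (Int.fract_lt_one x).le⟩

lemma apply_le_apply_floor_mul_apply_one {v : ℝ → ℝ} (hpos : ∀ x, 0 < v x)
    (hmono : ∀ x y, |x| ≤ |y| → v x ≤ v y) (hsub : ∀ x y, v (x + y) ≤ v x * v y) (x : ℝ) :
    v x ≤ v ⌊x⌋ * v 1 :=
  calc v x = v (⌊x⌋ + Int.fract x) := by rw [Int.floor_add_fract]
    _ ≤ v ⌊x⌋ * v (Int.fract x) := hsub _ _
    _ ≤ v ⌊x⌋ * v 1 := by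
      refine mul_le_mul_of_nonneg_left (hmono _ _ ?_) (hpos _).le
      rw [abs_of_nonneg (Int.fract_nonneg x), abs_one]
      exact (Int.fract_lt_one x).le

open scoped NNReal ENNReal in
lemma summable_comp_and_tsum_comp_le_of_encard_fiber_le {α β : Type*} {G : β → ℝ}
    (hG0 : ∀ b, 0 ≤ G b) (hG : Summable G) (φ : α → β) {N : ℕ} (hφ : ∀ b, (φ ⁻¹' {b}).encard ≤ N) :
    Summable (G ∘ φ) ∧ ∑' a, G (φ a) ≤ N * ∑' b, G b := by
  lift G to β → ℝ≥0 using hG0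
  rw [NNReal.summable_coe] at hG
  have key : ∑' a, (G (φ a) : ℝ≥0∞) ≤ N * ∑' b, (G b : ℝ≥0∞) := by
    rw [← ENNReal.tsum_fiberwise _ φ, ← ENNReal.tsum_mul_left]
    refine ENNReal.tsum_le_tsum fun b => ?_
    calc ∑' a : φ ⁻¹' {b}, (G (φ a) : ℝ≥0∞) = ∑' _ : φ ⁻¹' {b}, (G b : ℝ≥0∞) :=
          tsum_congr fun a => by rw [a.2]
      _ = (φ ⁻¹' {b}).encard * G b := ENNReal.tsum_set_const _ _
      _ ≤ N * G b := by gcongr; exact_mod_cast hφ b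
  have hfin : ∑' a, (G (φ a) : ℝ≥0∞) ≠ ∞ :=
    ne_top_of_le_ne_top
      (ENNReal.mul_ne_top (by simp) (ENNReal.tsum_coe_ne_top_iff_summable.2 hG)) key
  have hsum : Summable fun a => G (φ a) := ENNReal.tsum_coe_ne_top_iff_summable.1 hfin
  refine ⟨NNReal.summable_coe.2 hsum, ?_⟩
  rw [← ENNReal.coe_tsum hsum, ← ENNReal.coe_tsum hG] at key
  simp only [← NNReal.coe_tsum]
  exact_mod_cast key

lemma encard_floor_mul_preimage_le {c : ℝ} (hc : 0 < c) (l : ℤ) :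
    ((fun k : ℤ => ⌊c * k⌋) ⁻¹' {l}).encard ≤ ⌈1 / c⌉₊ := by
  have hsub : (fun k : ℤ => ⌊c * k⌋) ⁻¹' {l} ⊆ ↑(Finset.Ico ⌈l / c⌉ ⌈(l + 1) / c⌉) := by
    intro k hk
    simp only [mem_preimage, mem_singleton_iff, Int.floor_eq_iff] at hk
    simp only [Finset.coe_Ico, mem_Ico, Int.ceil_le, Int.lt_ceil, div_le_iff₀ hc, lt_div_iff₀ hc]
    constructor <;> linarith [mul_comm c k]
  have hceil : ⌈(l + 1) / c⌉ ≤ ⌈l / c⌉ + ⌈1 / c⌉₊ := by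
    rw [add_div, Int.natCast_ceil_eq_ceil (by positivity)]
    exact Int.ceil_add_le _ _
  calc _ ≤ ((Finset.Ico ⌈l / c⌉ ⌈(l + 1) / c⌉ : Finset ℤ) : Set ℤ).encard := encard_le_encard hsub
    _ = (Finset.Ico ⌈l / c⌉ ⌈(l + 1) / c⌉).card := encard_coe_eq_coe_finsetCard _
    _ = (⌈(l + 1) / c⌉ - ⌈l / c⌉).toNat := by rw [Int.card_Ico]
    _ ≤ ⌈1 / c⌉₊ := by exact_mod_cast (by omega : (⌈(l + 1) / c⌉ - ⌈l / c⌉).toNat ≤ ⌈1 / c⌉₊)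

lemma summable_and_tsum_comp_floor_mul_le {G : ℤ → ℝ} (hG0 : ∀ l, 0 ≤ G l) (hG : Summable G)
    {c : ℝ} (hc : 0 < c) :
    Summable (fun k : ℤ => G ⌊c * k⌋) ∧ ∑' k : ℤ, G ⌊c * k⌋ ≤ ⌈1 / c⌉₊ * ∑' l, G l :=
  summable_comp_and_tsum_comp_le_of_encard_fiber_le hG0 hG _ (encard_floor_mul_preimage_le hc)

lemma summable_and_mul_tsum_samples_le {f : ℝ → ℂ} {v : ℝ → ℝ} (hf : Continuous f)
    (hpos : ∀ x, 0 < v x) (hmono : ∀ x y, |x| ≤ |y| → v x ≤ v y)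
    (hsub : ∀ x y, v (x + y) ≤ v x * v y) (hW : Summable fun l : ℤ => locSup f l ^ 2 * v l ^ 2)
    {h : ℝ} (hh : 0 < h) :
    Summable (fun k : ℤ => ‖f (h * k)‖ ^ 2 * v (h * k) ^ 2) ∧
      h * ∑' k : ℤ, ‖f (h * k)‖ ^ 2 * v (h * k) ^ 2 ≤
        v 1 ^ 2 * (1 + h) * ∑' l : ℤ, locSup f l ^ 2 * v l ^ 2 := by
  set G : ℤ → ℝ := fun l => locSup f l ^ 2 * v l ^ 2
  have hG0 : ∀ l, 0 ≤ G l := fun l => by positivity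
  have hpt : ∀ x : ℝ, ‖f x‖ ^ 2 * v x ^ 2 ≤ v 1 ^ 2 * G ⌊x⌋ := fun x =>
    calc ‖f x‖ ^ 2 * v x ^ 2 ≤ locSup f ⌊x⌋ ^ 2 * (v ⌊x⌋ * v 1) ^ 2 := by
          gcongr
          · exact norm_le_locSup_floor hf x
          · exact (hpos x).le
          · exact apply_le_apply_floor_mul_apply_one hpos hmono hsub x
      _ = v 1 ^ 2 * G ⌊x⌋ := by ring
  obtain ⟨hGs, hGle⟩ := summable_and_tsum_comp_floor_mul_le hG0 hW hh
  have hs : Summable fun k : ℤ => ‖f (h * k)‖ ^ 2 * v (h * k) ^ 2 :=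
    (hGs.mul_left (v 1 ^ 2)).of_nonneg_of_le (fun k => by positivity) fun k => hpt _
  refine ⟨hs, ?_⟩
  have hceil : h * ⌈1 / h⌉₊ ≤ 1 + h :=
    calc h * ⌈1 / h⌉₊ ≤ h * (1 / h + 1) := by
          gcongr; exact (Nat.ceil_lt_add_one (one_div_pos.2 hh).le).le
      _ = 1 + h := by field_simp
  calc h * ∑' k : ℤ, ‖f (h * k)‖ ^ 2 * v (h * k) ^ 2
      ≤ h * ∑' k : ℤ, v 1 ^ 2 * G ⌊h * k⌋ :=
        mul_le_mul_of_nonneg_left (hs.tsum_le_tsum (fun k => hpt _) (hGs.mul_left _)) hh.le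
    _ = v 1 ^ 2 * (h * ∑' k : ℤ, G ⌊h * k⌋) := by rw [tsum_mul_left]; ring
    _ ≤ v 1 ^ 2 * (h * (⌈1 / h⌉₊ * ∑' l, G l)) := by gcongr
    _ ≤ v 1 ^ 2 * ((1 + h) * ∑' l, G l) := by
        rw [← mul_assoc h]
        exact mul_le_mul_of_nonneg_left (mul_le_mul_of_nonneg_right hceil (tsum_nonneg hG0))
          (sq_nonneg _)
    _ = v 1 ^ 2 * (1 + h) * ∑' l : ℤ, locSup f l ^ 2 * v l ^ 2 := by ring

lemma inv_sq_le_inv_sq_of_abs_le {v : ℝ → ℝ} (hpos : ∀ x, 0 < v x)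
    (hmono : ∀ x y, |x| ≤ |y| → v x ≤ v y) {x y : ℝ} (hxy : |x| ≤ |y|) :
    (v y ^ 2)⁻¹ ≤ (v x ^ 2)⁻¹ :=
  inv_anti₀ (pow_pos (hpos x) 2) (pow_le_pow_left₀ (hpos x).le (hmono x y hxy) 2)

lemma summable_inv_sq_mul_add_half {v : ℝ → ℝ} (hpos : ∀ x, 0 < v x)
    (hmono : ∀ x y, |x| ≤ |y| → v x ≤ v y) (hvsum : Summable fun l : ℤ => (v l ^ 2)⁻¹)
    {p : ℝ} (hp : 0 < p) : Summable fun m : ℕ => (v (p * m + p / 2) ^ 2)⁻¹ := by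
  have hℤ := (summable_and_tsum_comp_floor_mul_le (fun l => by positivity) hvsum hp).1
  refine (hℤ.comp_injective Nat.cast_injective).of_nonneg_of_le (fun m => by positivity)
    fun m => ?_
  have hx : 0 ≤ p * m := by positivity
  simp only [Function.comp_apply, Int.cast_natCast]
  refine inv_sq_le_inv_sq_of_abs_le hpos hmono ?_
  rw [abs_of_nonneg (by exact_mod_cast Int.floor_nonneg.2 hx), abs_of_nonneg (by positivity)]
  linarith [Int.floor_le (p * m)]

lemma summable_and_tsum_ne_zero_le_two_mul {F : {l : ℤ // l ≠ 0} → ℝ} {g : ℕ → ℝ}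
    (hF0 : ∀ l, 0 ≤ F l) (hg0 : ∀ m, 0 ≤ g m) (hg : Summable g)
    (hFg : ∀ l, F l ≤ g (l.1.natAbs - 1)) :
    Summable F ∧ ∑' l, F l ≤ 2 * ∑' m, g m := by
  have hfib : ∀ m : ℕ,
      ((fun l : {l : ℤ // l ≠ 0} => l.1.natAbs - 1) ⁻¹' {m}).encard ≤ (2 : ℕ) := fun m =>
    calc _ ≤ ({⟨m + 1, by omega⟩, ⟨-(m + 1), by omega⟩} : Set {l : ℤ // l ≠ 0}).encard := by
          refine encard_le_encard fun l hl => ?_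
          simp only [mem_preimage, mem_singleton_iff] at hl
          simp only [mem_insert_iff, mem_singleton_iff, Subtype.ext_iff]
          have := l.2
          omega
      _ ≤ 2 := (encard_insert_le _ _).trans (by simp [one_add_one_eq_two])
  obtain ⟨hs, hle⟩ := summable_comp_and_tsum_comp_le_of_encard_fiber_le hg0 hg _ hfib
  have hF := hs.of_nonneg_of_le hF0 hFg
  exact ⟨hF, (hF.tsum_le_tsum hFg hs).trans (by exact_mod_cast hle)⟩

lemma summable_and_tsum_inv_sq_shift_le {v : ℝ → ℝ} (hpos : ∀ x, 0 < v x)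
    (hmono : ∀ x y, |x| ≤ |y| → v x ≤ v y) {p y : ℝ} (hp : 0 ≤ p) (hy : |y| ≤ p / 2)
    (hΦ : Summable fun m : ℕ => (v (p * m + p / 2) ^ 2)⁻¹) :
    Summable (fun l : {l : ℤ // l ≠ 0} => (v (y + p * l) ^ 2)⁻¹) ∧
      ∑' l : {l : ℤ // l ≠ 0}, (v (y + p * l) ^ 2)⁻¹ ≤
        2 * ∑' m : ℕ, (v (p * m + p / 2) ^ 2)⁻¹ := by
  refine summable_and_tsum_ne_zero_le_two_mul (fun _ => by positivity) (fun _ => by positivity) hΦ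
    fun l => inv_sq_le_inv_sq_of_abs_le hpos hmono ?_
  have hl : (1 : ℝ) ≤ |(l : ℝ)| := by exact_mod_cast Int.one_le_abs l.2
  have hcast : ((l.1.natAbs - 1 : ℕ) : ℝ) = |(l : ℝ)| - 1 := by
    rw [Nat.cast_sub (by have := l.2; omega), Nat.cast_natAbs, Int.cast_abs, Nat.cast_one]
  have htri : p * |(l : ℝ)| - |y| ≤ |y + p * l| := by
    have := abs_sub_abs_le_abs_sub (p * l) (-y)
    rwa [abs_mul, abs_of_nonneg hp, abs_neg, sub_neg_eq_add, add_comm] at this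
  rw [hcast, abs_of_nonneg (by nlinarith)]
  linarith

lemma sq_norm_tsum_le_tsum_inv_sq_mul_tsum {ι E : Type*} [NormedAddCommGroup E] {a : ι → E}
    {w : ι → ℝ} (hw : ∀ i, 0 < w i) (hinv : Summable fun i => (w i ^ 2)⁻¹)
    (ha : Summable fun i => ‖a i‖ ^ 2 * w i ^ 2) :
    ‖∑' i, a i‖ ^ 2 ≤ (∑' i, (w i ^ 2)⁻¹) * ∑' i, ‖a i‖ ^ 2 * w i ^ 2 := by
  have hf : ∀ i, (w i)⁻¹ ^ (2 : ℝ) = (w i ^ 2)⁻¹ := fun i => by rw [Real.rpow_two, inv_pow]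
  have hg : ∀ i, (‖a i‖ * w i) ^ (2 : ℝ) = ‖a i‖ ^ 2 * w i ^ 2 := fun i => by
    rw [Real.rpow_two, mul_pow]
  have hfg : ∀ i, (w i)⁻¹ * (‖a i‖ * w i) = ‖a i‖ := fun i => by field_simp [(hw i).ne']
  obtain ⟨hs, hle⟩ := Real.summable_and_inner_le_Lp_mul_Lq_tsum_of_nonneg
    Real.HolderConjugate.two_two (f := fun i => (w i)⁻¹) (g := fun i => ‖a i‖ * w i)
    (fun i => (inv_pos.2 (hw i)).le) (fun i => mul_nonneg (norm_nonneg _) (hw i).le)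
    (by simpa only [hf] using hinv) (by simpa only [hg] using ha)
  simp only [hf, hg, hfg, ← Real.sqrt_eq_rpow] at hs hle
  calc ‖∑' i, a i‖ ^ 2 ≤ (∑' i, ‖a i‖) ^ 2 := by gcongr; exact norm_tsum_le_tsum_norm hs
    _ ≤ (√(∑' i, (w i ^ 2)⁻¹) * √(∑' i, ‖a i‖ ^ 2 * w i ^ 2)) ^ 2 :=
        pow_le_pow_left₀ (tsum_nonneg fun _ => norm_nonneg _) hle 2
    _ = _ := by
        rw [mul_pow, Real.sq_sqrt (tsum_nonneg fun _ => by positivity),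
          Real.sq_sqrt (tsum_nonneg fun _ => by positivity)]

lemma mem_Idx {n : ℕ} {j : ℤ} : j ∈ Idx n ↔ -(n : ℤ) < 2 * j ∧ 2 * j ≤ n := by
  simp only [Idx, Finset.mem_filter, Finset.mem_Icc, and_iff_right_iff_imp]
  omega

lemma abs_mul_le_of_mem_Idx {n : ℕ} {j : ℤ} (hj : j ∈ Idx n) {h : ℝ} (hh : 0 ≤ h) :
    |h * j| ≤ h * n / 2 := by
  rw [mem_Idx] at hj
  have hj' : |(j : ℝ)| * 2 ≤ n := by
    have : |j| * 2 ≤ n := by rcases abs_cases j with ⟨hj1, -⟩ | ⟨hj1, -⟩ <;> omega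
    rw [← Int.cast_abs]; exact_mod_cast this
  rw [abs_mul, abs_of_nonneg hh]
  nlinarith

lemma summable_shift_ne_zero {Q : ℝ → ℝ} {h : ℝ} (hQ : Summable fun k : ℤ => Q (h * k)) {n : ℕ}
    (hn : n ≠ 0) (j : ℤ) : Summable fun l : {l : ℤ // l ≠ 0} => Q (h * j + h * n * l) := by
  have hinj : Function.Injective fun l : {l : ℤ // l ≠ 0} => j + n * l.1 := fun l l' hll =>
    Subtype.ext (mul_left_cancel₀ (by exact_mod_cast hn) (add_left_cancel hll))
  refine (hQ.comp_injective hinj).congr fun l => ?_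
  simp only [Function.comp_apply]
  push_cast
  ring_nf

lemma sum_Idx_tsum_shift_le {Q : ℝ → ℝ} (hQ0 : ∀ x, 0 ≤ Q x) {h : ℝ}
    (hQ : Summable fun k : ℤ => Q (h * k)) (n : ℕ) :
    ∑ j ∈ Idx n, ∑' l : {l : ℤ // l ≠ 0}, Q (h * j + h * n * l) ≤ ∑' k : ℤ, Q (h * k) := by
  set E : Idx n × {l : ℤ // l ≠ 0} → ℤ := fun jl => jl.1 + n * jl.2.1
  have hE : Function.Injective E := by
    rintro ⟨⟨j, hj⟩, ⟨l, _⟩⟩ ⟨⟨j', hj'⟩, ⟨l', _⟩⟩ hjl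
    simp only [E] at hjl
    rw [mem_Idx] at hj hj'
    -- `Idx n` is a window of `n` consecutive integers, hence meets each residue class once
    have hjj : j - j' = 0 :=
      Int.eq_zero_of_abs_lt_dvd (m := n) ⟨l' - l, by linear_combination hjl⟩
        (abs_lt.2 ⟨by omega, by omega⟩)
    have hll : l = l' :=
      mul_left_cancel₀ (by omega : (n : ℤ) ≠ 0) (by linear_combination hjl - hjj)
    simp only [Prod.mk.injEq, Subtype.mk.injEq]
    exact ⟨by omega, hll⟩
  have hs : Summable fun jl => Q (h * E jl) := hQ.comp_injective hE
  have hcast : ∀ (j : Idx n) (l : {l : ℤ // l ≠ 0}), Q (h * j + h * n * l) = Q (h * E (j, l)) :=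
    fun j l => by simp only [E]; push_cast; ring_nf
  calc ∑ j ∈ Idx n, ∑' l : {l : ℤ // l ≠ 0}, Q (h * j + h * n * l)
      = ∑' jl : Idx n × {l : ℤ // l ≠ 0}, Q (h * E jl) := by
        rw [← Finset.tsum_subtype, hs.tsum_prod]
        simp only [hcast]
    _ ≤ ∑' k : ℤ, Q (h * k) :=
        Summable.tsum_le_tsum_of_inj E hE (fun _ _ => hQ0 _) (fun _ => le_rfl) hs hQ

lemma sq_norm_tsum_shift_le {f : ℝ → ℂ} {v : ℝ → ℝ} (hpos : ∀ x, 0 < v x)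
    (hmono : ∀ x y, |x| ≤ |y| → v x ≤ v y) (hvsum : Summable fun l : ℤ => (v l ^ 2)⁻¹)
    {h : ℝ} (hh : 0 < h) (hs : Summable fun k : ℤ => ‖f (h * k)‖ ^ 2 * v (h * k) ^ 2)
    {n : ℕ} {j : ℤ} (hj : j ∈ Idx n) :
    ‖∑' l : {l : ℤ // l ≠ 0}, f (h * j + h * n * l)‖ ^ 2 ≤
      2 * (∑' m : ℕ, (v (h * n * m + h * n / 2) ^ 2)⁻¹) *
        ∑' l : {l : ℤ // l ≠ 0}, ‖f (h * j + h * n * l)‖ ^ 2 * v (h * j + h * n * l) ^ 2 := by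
  have hn : n ≠ 0 := by have := mem_Idx.1 hj; omega
  have hΦ := summable_inv_sq_mul_add_half hpos hmono hvsum (by positivity : 0 < h * n)
  obtain ⟨hinv, hle⟩ := summable_and_tsum_inv_sq_shift_le hpos hmono (by positivity)
    (abs_mul_le_of_mem_Idx hj hh.le) hΦ
  calc _ ≤ (∑' l : {l : ℤ // l ≠ 0}, (v (h * j + h * n * l) ^ 2)⁻¹) *
          ∑' l : {l : ℤ // l ≠ 0}, ‖f (h * j + h * n * l)‖ ^ 2 * v (h * j + h * n * l) ^ 2 :=
        sq_norm_tsum_le_tsum_inv_sq_mul_tsum (fun _ => hpos _) hinv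
          (summable_shift_ne_zero (Q := fun x => ‖f x‖ ^ 2 * v x ^ 2) hs hn j)
    _ ≤ _ := mul_le_mul_of_nonneg_right hle (tsum_nonneg fun _ => by positivity)

theorem sampled_periodization_bound_general (v : ℝ → ℝ) (f : ℝ → ℂ)
    (hpos : ∀ x, 0 < v x)
    (hmono : ∀ x y, |x| ≤ |y| → v x ≤ v y)
    (hsub : ∀ x y, v (x + y) ≤ v x * v y)
    (hvsum : Summable fun l : ℤ => (v (l : ℝ) ^ 2)⁻¹)
    (hf : Continuous f)
    (hW : Summable fun l : ℤ => locSup f l ^ 2 * v (l : ℝ) ^ 2)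
    (h : ℝ) (hh : 0 < h) (n : ℕ) (p : ℝ) (hp : p = h * n) :
    Real.sqrt (h * ∑ j ∈ Idx n,
        ‖∑' l : {l : ℤ // l ≠ 0}, f (h * (j : ℝ) + p * ((l : ℤ) : ℝ))‖ ^ 2) ≤
      v 1 * Real.sqrt (2 * ∑' m : ℕ, (v (p * (m : ℝ) + p/2) ^ 2)⁻¹) *
        Real.sqrt (1 + h) * Real.sqrt (∑' l : ℤ, locSup f l ^ 2 * v (l : ℝ) ^ 2) := by
  subst hp
  set Φ := ∑' m : ℕ, (v (h * n * m + h * n / 2) ^ 2)⁻¹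
  set W := ∑' l : ℤ, locSup f l ^ 2 * v l ^ 2
  set Q : ℝ → ℝ := fun x => ‖f x‖ ^ 2 * v x ^ 2
  have hQ0 : ∀ x, 0 ≤ Q x := fun x => by positivity
  obtain ⟨hQ, hQW⟩ := summable_and_mul_tsum_samples_le hf hpos hmono hsub hW hh
  have hC : 0 ≤ v 1 * √(2 * Φ) * √(1 + h) := by have := hpos 1; positivity
  have key : h * ∑ j ∈ Idx n, ‖∑' l : {l : ℤ // l ≠ 0}, f (h * j + h * n * l)‖ ^ 2 ≤
      (v 1 * √(2 * Φ) * √(1 + h)) ^ 2 * W :=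
    calc _ ≤ h * ∑ j ∈ Idx n, 2 * Φ * ∑' l : {l : ℤ // l ≠ 0}, Q (h * j + h * n * l) := by
          gcongr with j hj; exact sq_norm_tsum_shift_le hpos hmono hvsum hh hQ hj
      _ = 2 * Φ * (h * ∑ j ∈ Idx n, ∑' l : {l : ℤ // l ≠ 0}, Q (h * j + h * n * l)) := by
          rw [← Finset.mul_sum]; ring
      _ ≤ 2 * Φ * (h * ∑' k : ℤ, Q (h * k)) := by
          gcongr; exact sum_Idx_tsum_shift_le hQ0 hQ n
      _ ≤ 2 * Φ * (v 1 ^ 2 * (1 + h) * W) := by gcongr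
      _ = _ := by
          rw [mul_pow, mul_pow, Real.sq_sqrt (by positivity), Real.sq_sqrt (by positivity)]
          ring
  calc _ ≤ √((v 1 * √(2 * Φ) * √(1 + h)) ^ 2 * W) := Real.sqrt_le_sqrt key
    _ = _ := by rw [Real.sqrt_mul (sq_nonneg _), Real.sqrt_sq hC]

/-- Sampled deviation from the periodization: for an even, nondecreasing,
submultiplicative weight v with Σ_l v(l)^{-2} < ∞, h > 0, p = hn and a
continuous f with finite amalgam norm,
( h Σ_{j∈[n]} |Σ_{l≠0} f(hj + pl)|² )^{1/2} ≤ v(1)·Φ_v(p)·(1+h)^{1/2}·‖f‖_W. -/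
theorem sampled_periodization_bound (v : ℝ → ℝ) (f : ℝ → ℂ)
    (hpos : ∀ x, 0 < v x)
    (heven : ∀ x, v (-x) = v x)
    (hmono : ∀ x y, |x| ≤ |y| → v x ≤ v y)
    (hsub : ∀ x y, v (x + y) ≤ v x * v y)
    (hvsum : Summable fun l : ℤ => (v (l : ℝ) ^ 2)⁻¹)
    (hf : Continuous f)
    (hW : Summable fun l : ℤ => locSup f l ^ 2 * v (l : ℝ) ^ 2)
    (h : ℝ) (hh : 0 < h) (n : ℕ) (p : ℝ) (hp : p = h * n) :
    Real.sqrt (h * ∑ j ∈ Idx n,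
        ‖∑' l : {l : ℤ // l ≠ 0}, f (h * (j : ℝ) + p * ((l : ℤ) : ℝ))‖ ^ 2) ≤
      v 1 * Real.sqrt (2 * ∑' m : ℕ, (v (p * (m : ℝ) + p/2) ^ 2)⁻¹) *
        Real.sqrt (1 + h) * Real.sqrt (∑' l : ℤ, locSup f l ^ 2 * v (l : ℝ) ^ 2) :=
  sampled_periodization_bound_general v f hpos hmono hsub hvsum hf hW h hh n p hp
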